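/- Let p ≥ 2 be prime, δ ∈ (0,1/4], β ∈ (0,1/2] with β(1-β) = δ, and Δ_α = |α - β|² (distance mod p) for α ∈ ℤ/pℤ. Let B(δ) = {T ∈ ℝ^p : ⟨T,Δ⟩ ≤ δ, Σ_α T_α = 1, T_α ≥ 0 ∀α}. Then the vector w with w₀ = 1-β, w₁ = β, and w_α = 0 otherwise, is the unique minimizer of ⟨T,T⟩ over T ∈ B(δ). -/

import Mathlib

/-!
We have `Δ 0 = β²`, `Δ 1 = (1 - β)²` and `Δ α ≥ 1` otherwise, so `β (1 - β) = δ` gives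
`1 - δ - Δ α ≤ w α` for every `α`, with equality at `0` and `1`. Hence for `T ∈ B`
`⟨w, T⟩ ≥ (1 - δ) ∑ T - ⟨T, Δ⟩ ≥ 1 - 2δ = ⟨w, w⟩`, and then
`⟨T, T⟩ = ⟨w, w⟩ + 2 (⟨w, T⟩ - ⟨w, w⟩) + ‖T - w‖² > ⟨w, w⟩` unless `T = w`.
-/

/-- Distance of a real number to the nearest element of `p • ℤ`. -/
noncomputable def dmod (p : ℝ) (x : ℝ) : ℝ := |x - p * round (x / p)|

open Finset

theorem sum_mul_self_lt_of_sum_mul_self_le_sum_mul {ι : Type*} [Fintype ι] {w T : ι → ℝ}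
    (hne : T ≠ w) (h : ∑ i, w i * w i ≤ ∑ i, w i * T i) :
    ∑ i, w i * w i < ∑ i, T i * T i := by
  obtain ⟨i, hi⟩ := Function.ne_iff.1 hne
  have hpos : 0 < ∑ i, (T i - w i) ^ 2 :=
    sum_pos' (fun _ _ => sq_nonneg _) ⟨i, mem_univ _, sq_pos_of_ne_zero (sub_ne_zero.2 hi)⟩
  have hexpand : ∑ i, T i * T i
      = ∑ i, (T i - w i) ^ 2 + 2 * ∑ i, w i * T i - ∑ i, w i * w i := by
    rw [mul_sum, ← sum_add_distrib, ← sum_sub_distrib]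
    exact sum_congr rfl fun i _ => by ring
  linarith

theorem dmod_eq_abs {p x : ℝ} (h : |x| < p / 2) : dmod p x = |x| := by
  have hp : 0 < p := by linarith [abs_nonneg x]
  have hround : round (x / p) = 0 := by
    rw [round_eq_zero_iff, Set.mem_Ico, le_div_iff₀ hp, div_lt_iff₀ hp]
    constructor <;> linarith [neg_abs_le x, le_abs_self x]
  simp [dmod, hround]

theorem one_le_dmod {p x : ℝ} (h₁ : 1 ≤ x) (h₂ : x ≤ p - 1) : 1 ≤ dmod p x := by
  unfold dmod
  rcases le_or_gt (round (x / p)) 0 with hr | hr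
  · have : p * round (x / p) ≤ 0 :=
      mul_nonpos_of_nonneg_of_nonpos (by linarith) (by exact_mod_cast hr)
    rw [abs_of_nonneg (by linarith)]
    linarith
  · have : p ≤ p * round (x / p) :=
      le_mul_of_one_le_right (by linarith) (by exact_mod_cast hr)
    rw [abs_of_nonpos (by linarith)]
    linarith

section TwoPoint

/-- `Δ α = |α - β|²`, the distance taken modulo `p`. -/
noncomputable def dmodSqDist (p : ℕ) (β : ℝ) (α : Fin p) : ℝ := dmod p ((α : ℕ) - β) ^ 2

def twoPointWeight (p : ℕ) (β : ℝ) (α : Fin p) : ℝ :=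
  if (α : ℕ) = 0 then 1 - β else if (α : ℕ) = 1 then β else 0

variable {p : ℕ} {β : ℝ}

theorem sum_twoPointWeight_mul (hp : 1 < p) (f : Fin p → ℝ) :
    ∑ α, twoPointWeight p β α * f α = (1 - β) * f ⟨0, by omega⟩ + β * f ⟨1, hp⟩ := by
  obtain ⟨n, rfl⟩ : ∃ n, p = n + 2 := ⟨p - 2, by omega⟩
  simp [twoPointWeight, Fin.sum_univ_succ]

theorem twoPointWeight_zero (hp : 0 < p) : twoPointWeight p β ⟨0, hp⟩ = 1 - β := if_pos rfl

theorem twoPointWeight_one (hp : 1 < p) : twoPointWeight p β ⟨1, hp⟩ = β := by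
  simp [twoPointWeight]

theorem twoPointWeight_of_two_le {α : Fin p} (hα : 2 ≤ (α : ℕ)) : twoPointWeight p β α = 0 := by
  simp only [twoPointWeight]
  rw [if_neg (by omega), if_neg (by omega)]

theorem twoPointWeight_nonneg (hβ₀ : 0 ≤ β) (hβ₁ : β ≤ 1) (α : Fin p) :
    0 ≤ twoPointWeight p β α := by
  unfold twoPointWeight
  split_ifs <;> linarith

theorem dmodSqDist_zero (hp : 2 ≤ p) (hβ₀ : 0 ≤ β) (hβ₁ : β < 1) :
    dmodSqDist p β ⟨0, by omega⟩ = β ^ 2 := by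
  have hp' : (2 : ℝ) ≤ p := by exact_mod_cast hp
  have h : dmod p (-β) = |-β| := dmod_eq_abs (by rw [abs_lt]; constructor <;> linarith)
  simp [dmodSqDist, h]

theorem dmodSqDist_one (hp : 2 ≤ p) (hβ₀ : 0 < β) (hβ₁ : β ≤ 1) :
    dmodSqDist p β ⟨1, by omega⟩ = (1 - β) ^ 2 := by
  have hp' : (2 : ℝ) ≤ p := by exact_mod_cast hp
  have h : dmod p (1 - β) = |1 - β| := dmod_eq_abs (by rw [abs_lt]; constructor <;> linarith)
  simp [dmodSqDist, h]

theorem one_le_dmodSqDist (hβ₀ : 0 ≤ β) (hβ₁ : β ≤ 1) {α : Fin p} (hα : 2 ≤ (α : ℕ)) :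
    1 ≤ dmodSqDist p β α := by
  have hα₂ : (2 : ℝ) ≤ (α : ℕ) := by exact_mod_cast hα
  have hαp : ((α : ℕ) + 1 : ℝ) ≤ p := by exact_mod_cast α.isLt
  exact one_le_pow₀ (one_le_dmod (by linarith) (by linarith))

/-- The dual certificate: `w` dominates the affine function `1 - δ - Δ`, with equality on the
support of `w`. -/
theorem one_sub_sub_dmodSqDist_le_twoPointWeight (hp : 2 ≤ p) (hβ₀ : 0 < β) (hβ₁ : β < 1)
    (α : Fin p) : 1 - β * (1 - β) - dmodSqDist p β α ≤ twoPointWeight p β α := by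
  rcases α with ⟨_ | _ | n, hn⟩
  · rw [dmodSqDist_zero hp hβ₀.le hβ₁, twoPointWeight_zero]
    nlinarith
  · rw [dmodSqDist_one hp hβ₀ hβ₁.le, twoPointWeight_one]
    nlinarith
  · have := one_le_dmodSqDist hβ₀.le hβ₁.le (α := ⟨n + 2, hn⟩) le_add_self
    rw [twoPointWeight_of_two_le le_add_self]
    nlinarith

end TwoPoint

theorem stmt9_general (p : ℕ) (hp : p.Prime) (δ β : ℝ)
    (hβ : β ∈ Set.Ioc (0 : ℝ) (1 / 2))
    (hβδ : β * (1 - β) = δ) :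
    let Δ : Fin p → ℝ := fun α => (dmod p ((α : ℕ) - β)) ^ 2
    let B : Set (Fin p → ℝ) := {T | ∑ α, T α * Δ α ≤ δ ∧ ∑ α, T α = 1 ∧ ∀ α, 0 ≤ T α}
    let w : Fin p → ℝ := fun α =>
      if (α : ℕ) = 0 then 1 - β else if (α : ℕ) = 1 then β else 0
    w ∈ B ∧ ∀ T ∈ B, T ≠ w → ∑ α, w α * w α < ∑ α, T α * T α := by
  intro Δ B w
  obtain ⟨hβ₀, hβ₁⟩ := hβ
  have hp₂ := hp.two_le
  have hw : ∀ f : Fin p → ℝ, ∑ α, w α * f α = (1 - β) * f ⟨0, by omega⟩ + β * f ⟨1, hp₂⟩ :=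
    sum_twoPointWeight_mul hp₂
  have hΔ₀ : Δ ⟨0, by omega⟩ = β ^ 2 := dmodSqDist_zero hp₂ hβ₀.le (by linarith)
  have hΔ₁ : Δ ⟨1, hp₂⟩ = (1 - β) ^ 2 := dmodSqDist_one hp₂ hβ₀ (by linarith)
  have hw_lower : ∀ α, 1 - δ - Δ α ≤ w α :=
    hβδ ▸ one_sub_sub_dmodSqDist_le_twoPointWeight hp₂ hβ₀ (by linarith)
  have hww : ∑ α, w α * w α = 1 - 2 * δ := by
    rw [hw, show w ⟨0, _⟩ = 1 - β from twoPointWeight_zero _,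
      show w ⟨1, hp₂⟩ = β from twoPointWeight_one hp₂]
    nlinarith
  refine ⟨⟨?_, by simpa using hw 1, twoPointWeight_nonneg hβ₀.le (by linarith)⟩, ?_⟩
  · rw [hw Δ, hΔ₀, hΔ₁]; nlinarith
  rintro T ⟨hTΔ, hTsum, hTnn⟩ hTw
  refine sum_mul_self_lt_of_sum_mul_self_le_sum_mul hTw ?_
  calc ∑ α, w α * w α = (1 - δ) * ∑ α, T α - δ := by rw [hww, hTsum]; ring
    _ ≤ (1 - δ) * ∑ α, T α - ∑ α, T α * Δ α := by linarith
    _ ≤ ∑ α, w α * T α := by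
      rw [mul_sum, ← sum_sub_distrib]
      exact sum_le_sum fun α _ => by nlinarith [hw_lower α, hTnn α]

theorem stmt9 (p : ℕ) (hp : p.Prime) (δ β : ℝ)
    (hδ : δ ∈ Set.Ioc (0 : ℝ) (1 / 4)) (hβ : β ∈ Set.Ioc (0 : ℝ) (1 / 2))
    (hβδ : β * (1 - β) = δ) :
    let Δ : Fin p → ℝ := fun α => (dmod p ((α : ℕ) - β)) ^ 2
    let B : Set (Fin p → ℝ) := {T | ∑ α, T α * Δ α ≤ δ ∧ ∑ α, T α = 1 ∧ ∀ α, 0 ≤ T α}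
    let w : Fin p → ℝ := fun α =>
      if (α : ℕ) = 0 then 1 - β else if (α : ℕ) = 1 then β else 0
    w ∈ B ∧ ∀ T ∈ B, T ≠ w → ∑ α, w α * w α < ∑ α, T α * T α :=
  stmt9_general p hp δ β hβ hβδ
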